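/- For every integer k ≥ 2, h_k(ρ_k) > 0, hence Δ_k(ρ_k) > 0, and consequently ρ_k = 1/(1+√(8+8k)) < η_k < 1/√(8+8k). -/

import Mathlib

open Filter Set

/-- `C_k = (2k-2)!/(k-1)!` as a real number. -/
noncomputable def Cc (k : ℕ) : ℝ :=
  ((2 * k - 2).factorial : ℝ) / ((k - 1).factorial : ℝ)

/-- `p_k(z) = 1 − 2z − (7+8k)z²`. -/
noncomputable def Pp (k : ℕ) (z : ℝ) : ℝ := 1 - 2 * z - (7 + 8 * k) * z ^ 2

/-- `h_k(z) = 1 − z − C_k·z^{2k+1}`. -/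
noncomputable def Hh (k : ℕ) (z : ℝ) : ℝ := 1 - z - Cc k * z ^ (2 * k + 1)

/-- `Δ_k(z) = p_k(z) + 4·C_k·z^{2k+1}·h_k(z)`. -/
noncomputable def Dd (k : ℕ) (z : ℝ) : ℝ :=
  Pp k z + 4 * Cc k * z ^ (2 * k + 1) * Hh k z

/-- `g_k(z) = 2 − C_k·z^{2k−1}·(h_k(z) − C_k·z^{2k−1})`. -/
noncomputable def Gg (k : ℕ) (z : ℝ) : ℝ :=
  2 - Cc k * z ^ (2 * k - 1) * (Hh k z - Cc k * z ^ (2 * k - 1))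

/-- `ρ_k = 1/(1+√(8+8k))`, the positive root of `p_k`. -/
noncomputable def rho (k : ℕ) : ℝ := 1 / (1 + Real.sqrt (8 + 8 * k))

/-- `ψ_k(x) = −x·Δ_k′(x)`. -/
noncomputable def psi (k : ℕ) (x : ℝ) : ℝ := -x * deriv (Dd k) x

/-- `η` is a root of `Δ_k` in the interval `(0, 1/√(8+8k))`, and is the unique such root. -/
def IsEta (k : ℕ) (η : ℝ) : Prop :=
  η ∈ Set.Ioo (0 : ℝ) (1 / Real.sqrt (8 + 8 * k)) ∧ Dd k η = 0 ∧
    ∀ x ∈ Set.Ioo (0 : ℝ) (1 / Real.sqrt (8 + 8 * k)), Dd k x = 0 → x = η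

/-!
Since `C_k = k(k+1)⋯(2k-2) ≤ (2k-2)^{k-1}`, on the range `(8+8k)z² ≤ 1` the term `C_k z^{2k+1}`
is at most `z³/4`, so there `h_k` is close to `1 - z` and the correction `4 C_k z^{2k+1} h_k(z)`
is at most `z³`. Hence `Δ_k(ρ_k) = 4 C_k ρ_k^{2k+1} h_k(ρ_k) > 0`, while at `b = 1/√(8+8k)` we
have `p_k(b) = b² - 2b`, so `Δ_k(b) ≤ b³ + b² - 2b < 0`. The intermediate value theorem puts a
root of `Δ_k` in `(ρ_k, b)`, and by uniqueness it is `η_k`.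
-/

theorem Cc_eq_descFactorial (k : ℕ) : Cc k = ((2 * k - 2).descFactorial (k - 1) : ℝ) := by
  have hfac := Nat.factorial_mul_descFactorial (show k - 1 ≤ 2 * k - 2 by omega)
  rw [show 2 * k - 2 - (k - 1) = k - 1 by omega] at hfac
  rw [Cc, ← hfac, Nat.cast_mul, mul_div_cancel_left₀ _ (by positivity)]

theorem Cc_pos (k : ℕ) : 0 < Cc k := by
  unfold Cc; positivity

theorem Cc_le_pow (k : ℕ) : Cc k ≤ ((2 * k - 2 : ℕ) : ℝ) ^ (k - 1) := by
  rw [Cc_eq_descFactorial]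
  exact_mod_cast Nat.descFactorial_le_pow _ _

section

variable {k : ℕ} {x : ℝ}

theorem Cc_mul_pow_le (hk : 2 ≤ k) (hx0 : 0 ≤ x) (hx : (8 + 8 * k) * x ^ 2 ≤ 1) :
    Cc k * x ^ (2 * k + 1) ≤ x ^ 3 / 4 := by
  have hsplit : x ^ (2 * k + 1) = (x ^ 2) ^ (k - 1) * x ^ 3 := by
    rw [← pow_mul, ← pow_add]; congr 1; omega
  have hbase : ((2 * k - 2 : ℕ) : ℝ) * x ^ 2 ≤ 1 / 4 := by
    rw [Nat.cast_sub (by omega)]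
    push_cast
    nlinarith [sq_nonneg x]
  have hfactor : Cc k * (x ^ 2) ^ (k - 1) ≤ 1 / 4 :=
    calc Cc k * (x ^ 2) ^ (k - 1) ≤ ((2 * k - 2 : ℕ) : ℝ) ^ (k - 1) * (x ^ 2) ^ (k - 1) := by
          gcongr; exact Cc_le_pow k
      _ = (((2 * k - 2 : ℕ) : ℝ) * x ^ 2) ^ (k - 1) := (mul_pow _ _ _).symm
      _ ≤ (1 / 4) ^ (k - 1) := by gcongr
      _ ≤ (1 / 4) ^ 1 := pow_le_pow_of_le_one (by norm_num) (by norm_num) (by omega)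
      _ = 1 / 4 := pow_one _
  rw [hsplit, ← mul_assoc]
  nlinarith [pow_nonneg hx0 3]

theorem Hh_pos (hk : 2 ≤ k) (hx0 : 0 ≤ x) (hx : (8 + 8 * k) * x ^ 2 ≤ 1) : 0 < Hh k x := by
  have hK : (2 : ℝ) ≤ k := by exact_mod_cast hk
  have hx4 : x ≤ 1 / 4 := by nlinarith
  have := Cc_mul_pow_le hk hx0 hx
  unfold Hh
  nlinarith [pow_le_pow_left₀ hx0 hx4 3]

theorem Dd_neg_of_sq_eq_one (hk : 2 ≤ k) (hx0 : 0 < x) (hx : (8 + 8 * k) * x ^ 2 = 1) :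
    Dd k x < 0 := by
  have hx1 : x < 1 := by nlinarith
  have hPp : Pp k x = x ^ 2 - 2 * x := by unfold Pp; linear_combination -hx
  have hterm : 0 ≤ Cc k * x ^ (2 * k + 1) := mul_nonneg (Cc_pos k).le (by positivity)
  have hHh : Hh k x ≤ 1 := by unfold Hh; linarith
  have hcorr : 4 * Cc k * x ^ (2 * k + 1) * Hh k x ≤ x ^ 3 :=
    calc 4 * Cc k * x ^ (2 * k + 1) * Hh k x = 4 * (Cc k * x ^ (2 * k + 1)) * Hh k x := by ring
      _ ≤ 4 * (Cc k * x ^ (2 * k + 1)) * 1 := mul_le_mul_of_nonneg_left hHh (by positivity)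
      _ ≤ x ^ 3 := by linarith [Cc_mul_pow_le hk hx0.le hx.le]
  have hneg : x ^ 3 + (x ^ 2 - 2 * x) < 0 := by
    nlinarith [mul_pos hx0 (by linarith : (0 : ℝ) < 1 - x)]
  unfold Dd
  linarith

theorem Dd_eq_of_Pp_eq_zero (h : Pp k x = 0) : Dd k x = 4 * Cc k * x ^ (2 * k + 1) * Hh k x := by
  rw [Dd, h, zero_add]

end

theorem continuous_Dd (k : ℕ) : Continuous (Dd k) := by
  unfold Dd Pp Hh; fun_prop

theorem sq_inv_sqrt_eq_one (k : ℕ) : (8 + 8 * k) * (1 / Real.sqrt (8 + 8 * k)) ^ 2 = 1 := by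
  rw [div_pow, Real.sq_sqrt (by positivity)]
  field_simp

theorem rho_pos (k : ℕ) : 0 < rho k := by
  unfold rho; positivity

theorem rho_lt_inv_sqrt (k : ℕ) : rho k < 1 / Real.sqrt (8 + 8 * k) := by
  unfold rho
  gcongr
  exact lt_one_add _

theorem Pp_rho (k : ℕ) : Pp k (rho k) = 0 := by
  have ht := Real.sq_sqrt (show (0 : ℝ) ≤ 8 + 8 * k by positivity)
  have : 0 < 1 + Real.sqrt (8 + 8 * k) := by positivity
  unfold Pp rho
  generalize Real.sqrt (8 + 8 * k) = t at *
  field_simp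
  linear_combination ht

/-- For every integer `k ≥ 2`, `h_k(ρ_k) > 0`, hence `Δ_k(ρ_k) > 0`, and
consequently `ρ_k = 1/(1+√(8+8k)) < η_k < 1/√(8+8k)`, where `η_k` is the unique root of
`Δ_k` in the real interval `(0, 1/√(8+8k))`. -/
theorem statement7 (k : ℕ) (hk : 2 ≤ k) (η : ℝ) (hη : IsEta k η) :
    0 < Hh k (rho k) ∧ 0 < Dd k (rho k) ∧
      rho k < η ∧ η < 1 / Real.sqrt (8 + 8 * k) := by
  have hb := sq_inv_sqrt_eq_one k
  have hρ0 := rho_pos k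
  have hρb := rho_lt_inv_sqrt k
  have hρ : (8 + 8 * k) * rho k ^ 2 ≤ 1 := by
    rw [← hb]; gcongr
  have hH : 0 < Hh k (rho k) := Hh_pos hk hρ0.le hρ
  have hD : 0 < Dd k (rho k) := by
    rw [Dd_eq_of_Pp_eq_zero (Pp_rho k)]
    have := Cc_pos k
    positivity
  obtain ⟨x, hx, hx0⟩ := intermediate_value_Ioo' hρb.le (continuous_Dd k).continuousOn
    ⟨Dd_neg_of_sq_eq_one hk (hρ0.trans hρb) hb, hD⟩
  obtain rfl := hη.2.2 x ⟨hρ0.trans hx.1, hx.2⟩ hx0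
  exact ⟨hH, hD, hx.1, hx.2⟩
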